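/- arXiv:2604.25628 — 8 statements merged into one kernel-verified Lean document; each statement's English description precedes it below -/
import Mathlib

section
/- If a language L of infinite words over a finite alphabet Σ has a finite set of residuals R(L) = {R_L(u) | u ∈ Σ*} that is totally ordered by inclusion, then L is counter-free: there exists n ∈ ℕ such that for all finite words u, v and all infinite words w, u v^n w ∈ L if and only if u v^(n+m) w ∈ L for all m ∈ ℕ. -/
/-- `wcat u x` : the infinite word obtained by prepending the finite word `u`
to the infinite word `x`. -/
def wcat {α : Type*} (u : List α) (x : ℕ → α) : ℕ → α :=
  fun n => if h : n < u.length then u.get ⟨n, h⟩ else x (n - u.length)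

/-- `wpow v n` : the finite word `v^n`. -/
def wpow {α : Type*} (v : List α) (n : ℕ) : List α := (List.replicate n v).flatten

/-- The residual of a language of infinite words by a finite word. -/
def res {α : Type*} (L : Set (ℕ → α)) (u : List α) : Set (ℕ → α) :=
  {x | wcat u x ∈ L}

lemma wcat_append {α : Type*} (a b : List α) (x : ℕ → α) :
    wcat (a ++ b) x = wcat a (wcat b x) := by
  funext n
  simp only [wcat, List.length_append, List.get_eq_getElem]
  by_cases h1 : n < a.length
  · rw [dif_pos h1, dif_pos (by omega)]
    exact List.getElem_append_left h1
  · rw [dif_neg h1]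
    by_cases h2 : n < a.length + b.length
    · rw [dif_pos h2, dif_pos (by omega)]
      rw [List.getElem_append_right (by omega)]
    · rw [dif_neg h2, dif_neg (by omega)]
      congr 1; omega

lemma res_append {α : Type*} (L : Set (ℕ → α)) (w v : List α) :
    res L (w ++ v) = {x | wcat v x ∈ res L w} := by
  ext x; simp [res, wcat_append]

lemma wpow_succ' {α : Type*} (v : List α) (k : ℕ) : wpow v (k+1) = wpow v k ++ v := by
  simp [wpow, List.replicate_succ']

/-- If a language `L ⊆ Σ^ω` over a finite alphabet has a finite set of residuals
totally ordered by inclusion, then `L` is counter-free. -/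
theorem stmt0 {σ : Type*} [Fintype σ] (L : Set (ℕ → σ))
    (hfin : {R : Set (ℕ → σ) | ∃ u : List σ, res L u = R}.Finite)
    (hchain : ∀ u v : List σ, res L u ⊆ res L v ∨ res L v ⊆ res L u) :
    ∃ n : ℕ, ∀ (u v : List σ) (w : ℕ → σ) (m : ℕ),
      wcat (u ++ wpow v n) w ∈ L ↔ wcat (u ++ wpow v (n + m)) w ∈ L := by
  classical
  set S := hfin.toFinset with hS
  refine ⟨S.card, ?_⟩
  intro u v w m
  set g : Set (ℕ → σ) → Set (ℕ → σ) := fun R => {x | wcat v x ∈ R} with hg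
  have gmono : ∀ R R' : Set (ℕ → σ), R ⊆ R' → g R ⊆ g R' := fun R R' h x hx => h hx
  set a : ℕ → Set (ℕ → σ) := fun k => res L (u ++ wpow v k) with ha
  have hstep : ∀ k, a (k+1) = g (a k) := by
    intro k
    have h1 : u ++ wpow v (k+1) = (u ++ wpow v k) ++ v := by
      rw [wpow_succ', List.append_assoc]
    show res L (u ++ wpow v (k+1)) = g (res L (u ++ wpow v k))
    rw [h1, res_append]
  have hiter : ∀ i k, a (i + k) = g^[k] (a i) := by
    intro i k; induction k with
    | zero => simp
    | succ k ih => rw [← Nat.add_assoc, hstep, ih]; exact (Function.iterate_succ_apply' g k (a i)).symm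
  have hmem : ∀ k, a k ∈ S := fun k => hfin.mem_toFinset.mpr ⟨_, rfl⟩
  have hcomp : ∀ k k', a k ⊆ a k' ∨ a k' ⊆ a k := fun k k' => hchain _ _
  obtain ⟨i, hi, j, hj, hne, heq⟩ :=
    Finset.exists_ne_map_eq_of_card_lt_of_maps_to
      (s := Finset.range (S.card + 1)) (t := S) (by simp) (fun k _ => hmem k)
  simp only [Finset.mem_range] at hi hj
  -- wlog i < j
  obtain ⟨i, j, hij, hjN, heq⟩ : ∃ i j : ℕ, i < j ∧ j ≤ S.card ∧ a i = a j := by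
    rcases lt_or_gt_of_ne hne with h | h
    · exact ⟨i, j, h, by omega, heq⟩
    · exact ⟨j, i, h, by omega, heq.symm⟩
  obtain ⟨p, hppos, hpj⟩ : ∃ p, 0 < p ∧ i + p = j := ⟨j - i, by omega, by omega⟩
  have hper : ∀ t, a (i + t + p) = a (i + t) := by
    intro t
    have h1 : i + t + p = (i + p) + t := by omega
    have h2 : i + p = j := hpj
    rw [h1, hiter, h2, ← heq, ← hiter]
  have hmax : ∀ n, 0 < n → ∃ t0, t0 < n ∧ ∀ t < n, a (i+t) ⊆ a (i+t0) := by
    intro n hn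
    induction n with
    | zero => omega
    | succ n ih =>
      rcases Nat.eq_zero_or_pos n with h0 | hnpos
      · subst h0
        exact ⟨0, by omega, fun t ht => by interval_cases t; exact subset_rfl⟩
      · obtain ⟨t0, ht0, hmax0⟩ := ih hnpos
        rcases hcomp (i + n) (i + t0) with h | h
        · refine ⟨t0, by omega, fun t ht => ?_⟩
          rcases Nat.lt_or_ge t n with h' | h'
          · exact hmax0 t h'
          · have : t = n := by omega
            subst this; exact h
        · refine ⟨n, by omega, fun t ht => ?_⟩
          rcases Nat.lt_or_ge t n with h' | h'
          · exact (hmax0 t h').trans h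
          · have : t = n := by omega
            subst this; exact subset_rfl
  obtain ⟨t0, ht0, hmax⟩ := hmax p hppos
  have hMsucc : a (i + t0 + 1) = a (i + t0) := by
    apply Set.Subset.antisymm
    · -- a (M+1) ⊆ a M
      rcases Nat.lt_or_ge (t0 + 1) p with h | h
      · have : i + t0 + 1 = i + (t0 + 1) := by omega
        rw [this]; exact hmax _ h
      · have hpt : t0 + 1 = p := by omega
        have : i + t0 + 1 = i + 0 + p := by omega
        rw [this, hper 0]
        exact hmax 0 hppos
    · -- a M ⊆ a (M+1)
      obtain ⟨s, hs, hgs⟩ : ∃ s, s < p ∧ g (a (i + s)) = a (i + t0) := by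
        rcases Nat.eq_zero_or_pos t0 with h0 | hpos
        · refine ⟨p - 1, by omega, ?_⟩
          rw [← hstep, h0]
          have h3 : i + (p - 1) + 1 = i + 0 + p := by omega
          rw [h3, hper 0]
        · refine ⟨t0 - 1, by omega, ?_⟩
          rw [← hstep]
          have h3 : i + (t0 - 1) + 1 = i + t0 := by omega
          rw [h3]
      have := gmono _ _ (hmax s hs)
      rw [hgs] at this
      calc a (i + t0) = g (a (i + s)) := hgs.symm
        _ ⊆ g (a (i + t0)) := gmono _ _ (hmax s hs)
        _ = a (i + t0 + 1) := (hstep (i + t0)).symm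
  have hconst : ∀ k, a (i + t0 + k) = a (i + t0) := by
    intro k; induction k with
    | zero => rfl
    | succ k ih => rw [← Nat.add_assoc, hstep, ih, ← hstep, hMsucc]
  have hMle : i + t0 ≤ S.card := by omega
  have e1 : a S.card = a (i + t0) := by
    have : S.card = i + t0 + (S.card - (i + t0)) := by omega
    rw [this, hconst]
  have e2 : a (S.card + m) = a (i + t0) := by
    have : S.card + m = i + t0 + (S.card + m - (i + t0)) := by omega
    rw [this, hconst]
  have hAB : a S.card = a (S.card + m) := by rw [e1, e2]
  show w ∈ res L (u ++ wpow v S.card) ↔ w ∈ res L (u ++ wpow v (S.card + m))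
  show w ∈ a S.card ↔ w ∈ a (S.card + m)
  rw [hAB]
end

section
/- Let L ⊆ Σ^ω be prefix-independent (for all u ∈ Σ*, x ∈ Σ^ω, x ∈ L ↔ u x ∈ L). Then L satisfies conditions (1) and (2) [(1): u v w x^ω ∈ L implies u v^ω ∈ L or u w x^ω ∈ L; (2): u (v w y)^ω ∈ L implies u v w^ω ∈ L or u (v y)^ω ∈ L] if and only if for all u, v ∈ Σ⁺, (u v)^ω ∈ L implies u^ω ∈ L or v^ω ∈ L. -/
def wper {α : Type*} [Inhabited α] (v : List α) : ℕ → α :=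
  fun n => v.getD (n % v.length) default

def PrefInd {σ : Type*} (L : Set (ℕ → σ)) : Prop :=
  ∀ (u : List σ) (x : ℕ → σ), x ∈ L ↔ wcat u x ∈ L

def cond1 {σ : Type*} [Inhabited σ] (L : Set (ℕ → σ)) : Prop :=
  ∀ (u v w x : List σ), v ≠ [] → w ≠ [] → x ≠ [] →
    wcat (u ++ v ++ w) (wper x) ∈ L →
      wcat u (wper v) ∈ L ∨ wcat (u ++ w) (wper x) ∈ L

def cond2 {σ : Type*} [Inhabited σ] (L : Set (ℕ → σ)) : Prop :=
  ∀ (u y v w : List σ), v ≠ [] → w ≠ [] →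
    wcat u (wper (v ++ w ++ y)) ∈ L →
      wcat (u ++ v) (wper w) ∈ L ∨ wcat u (wper (v ++ y)) ∈ L

lemma wcat_wper_rot {α : Type*} [Inhabited α] (a b : List α) (ha : a ≠ []) :
    wcat a (wper (b ++ a)) = wper (a ++ b) := by
  have hla : 0 < a.length := List.length_pos_iff.mpr ha
  funext n
  simp only [wcat, wper, List.length_append]
  set len := a.length + b.length with hlen
  have hlenpos : 0 < len := by omega
  by_cases h : n < a.length
  · rw [dif_pos h]
    have h2 : n % len = n := Nat.mod_eq_of_lt (by omega)
    rw [h2, List.getD_append a b default n h, List.getD_eq_getElem _ _ h]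
    rfl
  · rw [dif_neg h]
    have hblen : b.length + a.length = len := by omega
    rw [hblen]
    set r := (n - a.length) % len with hr
    have hrlt : r < len := Nat.mod_lt _ hlenpos
    have hn : (r + a.length) % len = n % len := by
      rw [hr, Nat.mod_add_mod, Nat.sub_add_cancel (le_of_not_gt h)]
    rw [← hn]
    by_cases hrb : r < b.length
    · have h3 : (r + a.length) % len = r + a.length := Nat.mod_eq_of_lt (by omega)
      rw [h3, List.getD_append_right a b default (r + a.length) (by omega),
        List.getD_append b a default r hrb]
      congr 1
      omega
    · have h3 : (r + a.length) % len = r - b.length := by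
        have h2 : r + a.length = (r - b.length) + len := by omega
        rw [h2, Nat.add_mod_right]
        exact Nat.mod_eq_of_lt (by omega)
      rw [h3, List.getD_append a b default (r - b.length) (by omega),
        List.getD_append_right b a default r (le_of_not_gt hrb)]

lemma wper_rot_mem {σ : Type*} [Inhabited σ] {L : Set (ℕ → σ)} (hpi : PrefInd L)
    (a b : List σ) (ha : a ≠ []) : wper (a ++ b) ∈ L ↔ wper (b ++ a) ∈ L := by
  have := hpi a (wper (b ++ a))
  rw [wcat_wper_rot a b ha] at this
  exact ⟨this.mpr, this.mp⟩

lemma wcat_nil {α : Type*} (x : ℕ → α) : wcat [] x = x := by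
  funext n; simp [wcat]

/-- For a prefix-independent language `L`, conditions (1) and (2) hold iff
for all nonempty finite words `u, v`, `(u v)^ω ∈ L` implies `u^ω ∈ L` or
`v^ω ∈ L`. -/
theorem stmt4 {σ : Type*} [Inhabited σ] (L : Set (ℕ → σ)) (hpi : PrefInd L) :
    (cond1 L ∧ cond2 L) ↔
      ∀ u v : List σ, u ≠ [] → v ≠ [] →
        wper (u ++ v) ∈ L → wper u ∈ L ∨ wper v ∈ L := by
  constructor
  · rintro ⟨-, h2⟩ u v hu hv hm
    have := h2 [] [] u v hu hv (by simpa [wcat_nil] using hm)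
    simp only [List.nil_append, List.append_nil, wcat_nil] at this
    rcases this with h | h
    · exact Or.inr ((hpi u (wper v)).mpr h)
    · exact Or.inl h
  · intro hP
    constructor
    · intro u v w x _ _ _ hm
      exact Or.inr ((hpi (u ++ w) (wper x)).mp ((hpi (u ++ v ++ w) (wper x)).mpr hm))
    · intro u y v w hv hw hm
      have h0 : wper (v ++ (w ++ y)) ∈ L := by
        have := (hpi u (wper (v ++ w ++ y))).mpr hm
        rwa [List.append_assoc] at this
      have h1 : wper (w ++ (y ++ v)) ∈ L := by
        have := (wper_rot_mem hpi v (w ++ y) hv).mp h0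
        rwa [List.append_assoc] at this
      have hyv : y ++ v ≠ [] := fun hc => hv (List.append_eq_nil_iff.mp hc).2
      rcases hP w (y ++ v) hw hyv h1 with h | h
      · exact Or.inl ((hpi (u ++ v) (wper w)).mp h)
      · have h2 : wper (v ++ y) ∈ L := (wper_rot_mem hpi v y hv).mpr h
        exact Or.inr ((hpi u (wper (v ++ y))).mp h2)
end

section
/- Let S ⊆ Σ be a set of letters and R ⊆ (Σ \ S)* a subword-closed language with residuals totally ordered by inclusion. Let L = Σ*(S·R)^ω be the set of infinite words having a suffix which is an infinite concatenation of blocks each consisting of a letter of S followed by a word of R. Then for all u, v ∈ Σ⁺, if (u v)^ω ∈ L then u^ω ∈ L or v^ω ∈ L. -/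
/-- The finite factor `x[a..b)` of an infinite word `x`. -/
def seg {α : Type*} (x : ℕ → α) (a b : ℕ) : List α :=
  (List.range (b - a)).map (fun j => x (a + j))

/-- Residual of a language of finite words. -/
def resF {α : Type*} (L : Set (List α)) (u : List α) : Set (List α) :=
  {w | u ++ w ∈ L}

/-- `SRomega S R` : the set `Σ*(S·R)^ω` of infinite words having a suffix which
is an infinite concatenation of blocks, each a letter of `S` followed by a word
of `R`. -/
def SRomega {σ : Type*} (S : Set σ) (R : Set (List σ)) : Set (ℕ → σ) :=
  {x | ∃ k : ℕ → ℕ, StrictMono k ∧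
    ∀ i, x (k i) ∈ S ∧ seg x (k i + 1) (k (i + 1)) ∈ R}

open Function

section Seg

variable {σ : Type*}

theorem mem_seg (y : ℕ → σ) {a b n : ℕ} (han : a ≤ n) (hnb : n < b) : y n ∈ seg y a b :=
  List.mem_map.2 ⟨n - a, List.mem_range.2 (by omega), by rw [Nat.add_sub_cancel' han]⟩

theorem seg_append_seg (y : ℕ → σ) {a b c : ℕ} (hab : a ≤ b) (hbc : b ≤ c) :
    seg y a b ++ seg y b c = seg y a c := by
  simp only [seg]
  rw [show c - a = (b - a) + (c - b) by omega, List.range_add, List.map_append, List.map_map]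
  congr 1
  exact List.map_congr_left fun j _ => by simp only [Function.comp_apply]; congr 1; omega

theorem seg_congr {y z : ℕ → σ} {a b : ℕ} (h : ∀ n, a ≤ n → n < b → y n = z n) :
    seg y a b = seg z a b :=
  List.map_congr_left fun j hj => h _ (by omega) (by simp at hj; omega)

theorem seg_comp_add (y : ℕ → σ) (c a b : ℕ) :
    seg (fun n => y (n + c)) a b = seg y (a + c) (b + c) := by
  simp only [seg, Nat.add_sub_add_right]
  exact List.map_congr_left fun j _ => congrArg y (by omega)

theorem Function.Periodic.seg_add {y : ℕ → σ} {N : ℕ} (hy : Periodic y N) (a b : ℕ) :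
    seg y (a + N) (b + N) = seg y a b := by
  rw [← seg_comp_add]
  exact congrArg (seg · a b) (funext hy)

theorem Function.Periodic.seg_append_of_lt {y : ℕ → σ} {N c : ℕ} (hy : Periodic y N) (hc : c < N)
    (e : ℕ) : seg y (c + 1) (N + e) = seg y (c + 1) N ++ seg y 0 e := by
  rw [← seg_append_seg y hc (by omega), add_comm N e, ← hy.seg_add 0 e, zero_add]

end Seg

section Gap

variable {σ : Type*} {S : Set σ} {R : Set (List σ)} {y z : ℕ → σ} {a b : ℕ}

structure IsGap (S : Set σ) (y : ℕ → σ) (a b : ℕ) : Prop where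
  lt : a < b
  left_mem : y a ∈ S
  right_mem : y b ∈ S
  not_mem : ∀ n, a < n → n < b → y n ∉ S

theorem IsGap.eq_of_lt {a' b' : ℕ} (h : IsGap S y a b) (h' : IsGap S y a' b') (hab' : a < b')
    (hba' : a' < b) : a = a' ∧ b = b' := by
  obtain ⟨-, ha, hb, hy⟩ := h
  obtain ⟨-, ha', hb', hy'⟩ := h'
  refine ⟨?_, ?_⟩
  · rcases lt_trichotomy a a' with h | h | h
    exacts [absurd ha' (hy a' h hba'), h, absurd ha (hy' a h hab')]
  · rcases lt_trichotomy b b' with h | h | h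
    exacts [absurd hb (hy' b (by omega) h), h, absurd hb' (hy b' (by omega) h)]

theorem IsGap.congr (h : IsGap S y a b) (hyz : ∀ n ≤ b, y n = z n) : IsGap S z a b := by
  obtain ⟨hab, ha, hb, hy⟩ := h
  refine ⟨hab, hyz a hab.le ▸ ha, hyz b le_rfl ▸ hb, fun n h₁ h₂ => ?_⟩
  rw [← hyz n h₂.le]
  exact hy n h₁ h₂

theorem isGap_comp_add_iff (c : ℕ) :
    IsGap S (fun n => y (n + c)) a b ↔ IsGap S y (a + c) (b + c) := by
  refine ⟨fun ⟨hab, ha, hb, hy⟩ => ⟨by omega, ha, hb, fun n h₁ h₂ => ?_⟩,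
    fun ⟨hab, ha, hb, hy⟩ => ⟨by omega, ha, hb, fun n h₁ h₂ => hy _ (by omega) (by omega)⟩⟩
  simpa [Nat.sub_add_cancel (by omega : c ≤ n)] using hy (n - c) (by omega) (by omega)

theorem Function.Periodic.isGap_add_iff {N : ℕ} (hy : Periodic y N) :
    IsGap S y (a + N) (b + N) ↔ IsGap S y a b := by
  rw [← isGap_comp_add_iff]
  exact iff_of_eq (congrArg (IsGap S · a b) (funext hy))

theorem exists_isGap_straddle {i j p : ℕ} (hi : y i ∈ S) (hj : y j ∈ S) (hip : i < p)
    (hpj : p ≤ j) : ∃ a b, IsGap S y a b ∧ a < p ∧ p ≤ b := by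
  classical
  have hex : ∃ n, p ≤ n ∧ y n ∈ S := ⟨j, hpj, hj⟩
  obtain ⟨hpb, hb⟩ := Nat.find_spec hex
  have hap : Nat.findGreatest (y · ∈ S) (p - 1) < p :=
    (Nat.findGreatest_le (p - 1)).trans_lt (by omega)
  refine ⟨_, Nat.find hex, ⟨by omega, ?_, hb, fun n h₁ h₂ hn => ?_⟩, hap, hpb⟩
  · exact Nat.findGreatest_spec (P := (y · ∈ S)) (show i ≤ p - 1 by omega) hi
  · by_cases hnp : n < p
    · exact Nat.findGreatest_is_greatest h₁ (by omega) hn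
    · exact Nat.find_min hex h₂ ⟨by omega, hn⟩

def GapsMem (S : Set σ) (R : Set (List σ)) (y : ℕ → σ) (n₀ : ℕ) : Prop :=
  ∀ a b, n₀ ≤ a → IsGap S y a b → seg y (a + 1) b ∈ R

theorem GapsMem.comp_add {n₀ : ℕ} (h : GapsMem S R y n₀) (c : ℕ) :
    GapsMem S R (fun n => y (n + c)) n₀ := by
  intro a b ha hg
  rw [seg_comp_add, Nat.add_right_comm]
  exact h _ _ (by omega) ((isGap_comp_add_iff c).1 hg)

theorem Function.Periodic.gapsMem_zero {N n₀ : ℕ} (hy : Periodic y N) (hN : 0 < N)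
    (h : GapsMem S R y n₀) : GapsMem S R y 0 := by
  intro a b _ hg
  have hy' := hy.nat_mul n₀
  rw [← hy'.seg_add, Nat.add_right_comm]
  exact h _ _ (by nlinarith) (hy'.isGap_add_iff.2 hg)

theorem Function.Periodic.gapsMem_zero_of_lt {N : ℕ} (hy : Periodic y N) (hN : 0 < N)
    (h : ∀ a b, a < N → IsGap S y a b → seg y (a + 1) b ∈ R) : GapsMem S R y 0 := by
  intro a
  induction a using Nat.strong_induction_on with
  | _ a ih =>
    intro b _ hg
    by_cases ha : a < N
    · exact h a b ha hg
    obtain ⟨a, rfl⟩ := Nat.exists_eq_add_of_le' (not_lt.1 ha)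
    obtain ⟨b, rfl⟩ := Nat.exists_eq_add_of_le' (hg.lt.le.trans' (Nat.le_add_left N a))
    rw [Nat.add_right_comm, hy.seg_add]
    exact ih a (by omega) b (Nat.zero_le a) (hy.isGap_add_iff.1 hg)

end Gap

section Omega

variable {σ : Type*} {S : Set σ} {R : Set (List σ)} {y : ℕ → σ}

theorem mem_SRomega_of_gapsMem {n₀ : ℕ} (hS : ∀ m, ∃ n, m ≤ n ∧ y n ∈ S)
    (hy : GapsMem S R y n₀) : y ∈ SRomega S R := by
  set p : ℕ → Prop := fun n => n₀ ≤ n ∧ y n ∈ S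
  have hp : (Set.ofPred p).Infinite := Set.infinite_of_forall_exists_gt fun m => by
    obtain ⟨n, hn, hnS⟩ := hS (max n₀ (m + 1))
    exact ⟨n, ⟨by omega, hnS⟩, by omega⟩
  have hmono := Nat.nth_strictMono hp
  have hmem := Nat.nth_mem_of_infinite hp
  refine ⟨Nat.nth p, hmono, fun i => ⟨(hmem i).2, hy _ _ (hmem i).1
    ⟨hmono i.lt_succ_self, (hmem i).2, (hmem (i + 1)).2, fun n h₁ h₂ hn => ?_⟩⟩⟩
  exact absurd (Nat.le_nth_of_lt_nth_succ h₂ ⟨(hmem i).1.trans h₁.le, hn⟩) (not_le.2 h₁)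

theorem gapsMem_of_mem_SRomega (hR : ∀ w ∈ R, ∀ z ∈ w, z ∉ S) (hy : y ∈ SRomega S R) :
    (∀ m, ∃ n, m ≤ n ∧ y n ∈ S) ∧ ∃ n₀, GapsMem S R y n₀ := by
  obtain ⟨k, hk, hkS⟩ := hy
  have hblock (i : ℕ) : IsGap S y (k i) (k (i + 1)) :=
    ⟨hk i.lt_succ_self, (hkS i).1, (hkS (i + 1)).1, fun n h₁ h₂ =>
      hR _ (hkS i).2 _ (mem_seg y h₁ h₂)⟩
  refine ⟨fun m => ⟨k m, hk.le_apply, (hkS m).1⟩, k 0, fun a b ha hg => ?_⟩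
  have hex : ∃ i, a < k (i + 1) := ⟨a, a.lt_succ_self.trans_le hk.le_apply⟩
  obtain ⟨i, hai, hki⟩ : ∃ i, a < k (i + 1) ∧ k i ≤ a := by
    refine ⟨Nat.find hex, Nat.find_spec hex, ?_⟩
    rcases h : Nat.find hex with _ | j
    · exact ha
    · exact not_lt.1 (Nat.find_min hex (by omega : j < Nat.find hex))
  obtain ⟨rfl, rfl⟩ := (hblock i).eq_of_lt hg (hki.trans_lt hg.lt) hai
  exact (hkS _).2

end Omega

section Wper

variable {σ : Type*} [Inhabited σ]

theorem periodic_wper (w : List σ) : Periodic (wper w) w.length := fun n => by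
  simp [wper]

theorem wper_mem {w : List σ} (hw : w ≠ []) (n : ℕ) : wper w n ∈ w := by
  rw [wper, List.getD_eq_getElem _ _ (Nat.mod_lt _ (List.length_pos_iff.2 hw))]
  exact List.getElem_mem _

theorem exists_wper_eq {w : List σ} {z : σ} (hz : z ∈ w) : ∃ n < w.length, wper w n = z := by
  obtain ⟨i, hi, rfl⟩ := List.getElem_of_mem hz
  exact ⟨i, hi, by rw [wper, Nat.mod_eq_of_lt hi, List.getD_eq_getElem _ _ hi]⟩

theorem wper_append_of_lt {u : List σ} (v : List σ) {n : ℕ} (hn : n < u.length) :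
    wper (u ++ v) n = wper u n := by
  rw [wper, wper, List.length_append, Nat.mod_eq_of_lt hn, Nat.mod_eq_of_lt (by omega),
    List.getD_append _ _ _ _ hn]

theorem wper_append_length_add (u : List σ) {v : List σ} {n : ℕ} (hn : n < v.length) :
    wper (u ++ v) (u.length + n) = wper v n := by
  rw [wper, wper, List.length_append, Nat.mod_eq_of_lt hn, Nat.mod_eq_of_lt (by omega),
    List.getD_append_right _ _ _ _ (Nat.le_add_right _ _), Nat.add_sub_cancel_left]

theorem wper_rotate (w : List σ) (k n : ℕ) : wper (w.rotate k) n = wper w (n + k) := by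
  rcases eq_or_ne w [] with rfl | hw
  · simp [wper]
  have hL := List.length_pos_iff.2 hw
  rw [wper, wper, List.length_rotate, List.getD_eq_getElem _ _ (by simpa using Nat.mod_lt n hL),
    List.getD_eq_getElem _ _ (Nat.mod_lt _ hL), List.getElem_rotate]
  simp only [Nat.mod_add_mod]

theorem wper_append_comm (u v : List σ) :
    wper (v ++ u) = fun n => wper (u ++ v) (n + u.length) := by
  funext n
  rw [← List.rotate_append_length_eq, wper_rotate]

end Wper

theorem append_mem_or_append_mem_of_resF_total {σ : Type*} {R : Set (List σ)}
    (hchain : ∀ r r' : List σ, resF R r ⊆ resF R r' ∨ resF R r' ⊆ resF R r) {a b c d : List σ}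
    (had : a ++ d ∈ R) (hcb : c ++ b ∈ R) : a ++ b ∈ R ∨ c ++ d ∈ R := by
  rcases hchain a c with h | h
  exacts [Or.inr (h had), Or.inl (h hcb)]

section Crossing

variable {σ : Type*} [Inhabited σ] {S : Set σ} {R : Set (List σ)} {u v w : List σ}

theorem seg_wper_length (w : List σ) : seg (wper w) 0 w.length = w := by
  refine List.ext_getElem (by simp [seg]) fun j h₁ h₂ => ?_
  simp [seg, wper, Nat.mod_eq_of_lt h₂, h₂]

theorem seg_wper_append_length {b : ℕ} (hb : b ≤ v.length) :
    seg (wper (u ++ v)) u.length (u.length + b) = seg (wper v) 0 b := by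
  simp only [seg, Nat.add_sub_cancel_left, Nat.sub_zero, zero_add]
  exact List.map_congr_left fun j hj => wper_append_length_add u (by simp at hj; omega)

theorem wper_mem_SRomega_of_gapsMem (hS : ∃ z ∈ w, z ∈ S) (h : GapsMem S R (wper w) 0) :
    wper w ∈ SRomega S R := by
  obtain ⟨z, hzw, hzS⟩ := hS
  obtain ⟨i, -, rfl⟩ := exists_wper_eq hzw
  have hL := List.length_pos_of_mem hzw
  refine mem_SRomega_of_gapsMem (fun m => ⟨i + m * w.length, by nlinarith, ?_⟩) h
  have hper := (periodic_wper w).nat_mul m i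
  rw [Nat.cast_id] at hper
  rwa [hper]

theorem gapsMem_wper_of_mem_SRomega (hR : ∀ r ∈ R, ∀ z ∈ r, z ∉ S) (hw : w ≠ [])
    (h : wper w ∈ SRomega S R) : (∃ z ∈ w, z ∈ S) ∧ GapsMem S R (wper w) 0 := by
  obtain ⟨hS, n₀, hn₀⟩ := gapsMem_of_mem_SRomega hR h
  obtain ⟨n, -, hn⟩ := hS 0
  exact ⟨⟨_, wper_mem hw n, hn⟩, (periodic_wper w).gapsMem_zero (List.length_pos_iff.2 hw) hn₀⟩

theorem exists_isGap_wper_crossing (hS : ∃ z ∈ u, z ∈ S) :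
    ∃ c e, c < u.length ∧ e ≤ c ∧ IsGap S (wper u) c (u.length + e) := by
  obtain ⟨z, hzu, hzS⟩ := hS
  obtain ⟨i, hi, rfl⟩ := exists_wper_eq hzu
  have hy := periodic_wper u
  obtain ⟨c, d, hg, hcN, hNd⟩ :=
    exists_isGap_straddle hzS ((hy i).symm ▸ hzS) hi (Nat.le_add_left _ i)
  obtain ⟨e, rfl⟩ := Nat.exists_eq_add_of_le hNd
  refine ⟨c, e, hcN, not_lt.1 fun hce => hg.not_mem (c + u.length) (by omega) (by omega) ?_, hg⟩
  rw [hy c]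
  exact hg.left_mem

theorem wper_mem_SRomega_of_crossing {c e : ℕ} (hx : GapsMem S R (wper (u ++ v)) 0)
    (hg : IsGap S (wper u) c (u.length + e)) (hc : c < u.length)
    (hwrap : seg (wper u) (c + 1) u.length ++ seg (wper u) 0 e ∈ R) : wper u ∈ SRomega S R := by
  have hu : u ≠ [] := List.ne_nil_of_length_pos (by omega)
  refine wper_mem_SRomega_of_gapsMem ⟨_, wper_mem hu c, hg.left_mem⟩ <|
    (periodic_wper u).gapsMem_zero_of_lt (by omega) fun a b ha hab => ?_
  by_cases hb : b < u.length
  · have hagree (n : ℕ) (hn : n ≤ b) : wper u n = wper (u ++ v) n :=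
      (wper_append_of_lt v (by omega)).symm
    rw [seg_congr fun n _ hn => hagree n hn.le]
    exact hx a b (Nat.zero_le a) (hab.congr hagree)
  · obtain ⟨rfl, rfl⟩ := hab.eq_of_lt hg (by omega) (by omega)
    rwa [(periodic_wper u).seg_append_of_lt hc]

theorem isGap_wper_append {c e c' e' : ℕ} (hc : c < u.length)
    (hg : IsGap S (wper u) c (u.length + e)) (hc' : c' < v.length) (he' : e' ≤ c')
    (hg' : IsGap S (wper v) c' (v.length + e')) :
    IsGap S (wper (u ++ v)) c (u.length + e') ∧ seg (wper (u ++ v)) (c + 1) (u.length + e') =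
      seg (wper u) (c + 1) u.length ++ seg (wper v) 0 e' := by
  have hyv := periodic_wper v
  refine ⟨⟨by omega, ?_, ?_, fun n h₁ h₂ => ?_⟩, ?_⟩
  · rw [wper_append_of_lt v hc]
    exact hg.left_mem
  · rw [wper_append_length_add u (by omega), ← hyv, add_comm]
    exact hg'.right_mem
  · by_cases hn : n < u.length
    · rw [wper_append_of_lt v hn]
      exact hg.not_mem n h₁ (by omega)
    · obtain ⟨m, rfl⟩ := Nat.exists_eq_add_of_le (not_lt.1 hn)
      rw [wper_append_length_add u (by omega), ← hyv]
      exact hg'.not_mem _ (by omega) (by omega)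
  · rw [← seg_append_seg _ hc (Nat.le_add_right _ e'), seg_wper_append_length (by omega),
      seg_congr fun n _ hn => wper_append_of_lt v hn]

theorem isGap_wper_append_of_forall_not_mem {c e : ℕ} (hc : c < u.length) (he : e ≤ c)
    (hg : IsGap S (wper u) c (u.length + e)) (hv : ∀ z ∈ v, z ∉ S) :
    IsGap S (wper (u ++ v)) c ((u ++ v).length + e) ∧
      seg (wper (u ++ v)) (c + 1) ((u ++ v).length + e) =
        seg (wper u) (c + 1) u.length ++ v ++ seg (wper u) 0 e := by
  have hyu := periodic_wper u
  have hx := periodic_wper (u ++ v)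
  have hP : (u ++ v).length = u.length + v.length := List.length_append
  refine ⟨⟨by omega, ?_, ?_, fun n h₁ h₂ => ?_⟩, ?_⟩
  · rw [wper_append_of_lt v hc]
    exact hg.left_mem
  · rw [add_comm, hx, wper_append_of_lt v (by omega), ← hyu, add_comm]
    exact hg.right_mem
  · by_cases hn : n < u.length
    · rw [wper_append_of_lt v hn]
      exact hg.not_mem n h₁ (by omega)
    by_cases hn' : n < (u ++ v).length
    · obtain ⟨m, rfl⟩ := Nat.exists_eq_add_of_le (not_lt.1 hn)
      rw [wper_append_length_add u (by omega)]
      exact hv _ (wper_mem (List.ne_nil_of_length_pos (by omega)) m)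
    · obtain ⟨m, rfl⟩ := Nat.exists_eq_add_of_le (not_lt.1 hn')
      rw [add_comm, hx, wper_append_of_lt v (by omega), ← hyu]
      exact hg.not_mem _ (by omega) (by omega)
  · rw [hx.seg_append_of_lt (by omega), hP, ← seg_append_seg _ hc (Nat.le_add_right _ _),
      seg_wper_append_length le_rfl, seg_wper_length,
      seg_congr fun n _ hn => wper_append_of_lt v hn,
      seg_congr fun n _ hn => wper_append_of_lt v (u := u) (hn.trans_le (by omega))]

theorem wper_mem_SRomega_or_of_gapsMem_append
    (hsub : ∀ r ∈ R, ∀ r' : List σ, r'.Sublist r → r' ∈ R)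
    (hchain : ∀ r r' : List σ, resF R r ⊆ resF R r' ∨ resF R r' ⊆ resF R r)
    (hS : ∃ z ∈ u, z ∈ S) (huv : GapsMem S R (wper (u ++ v)) 0)
    (hvu : GapsMem S R (wper (v ++ u)) 0) : wper u ∈ SRomega S R ∨ wper v ∈ SRomega S R := by
  obtain ⟨c, e, hc, he, hg⟩ := exists_isGap_wper_crossing hS
  by_cases hSv : ∃ z ∈ v, z ∈ S
  · obtain ⟨c', e', hc', he', hg'⟩ := exists_isGap_wper_crossing hSv
    obtain ⟨hx, hxseg⟩ := isGap_wper_append hc hg hc' he' hg'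
    obtain ⟨hx', hxseg'⟩ := isGap_wper_append hc' hg' hc he hg
    have h := hxseg ▸ huv _ _ (Nat.zero_le c) hx
    have h' := hxseg' ▸ hvu _ _ (Nat.zero_le c') hx'
    exact (append_mem_or_append_mem_of_resF_total hchain h h').imp
      (wper_mem_SRomega_of_crossing huv hg hc) (wper_mem_SRomega_of_crossing hvu hg' hc')
  · push Not at hSv
    obtain ⟨hx, hxseg⟩ := isGap_wper_append_of_forall_not_mem hc he hg hSv
    have h := hxseg ▸ huv _ _ (Nat.zero_le c) hx
    exact Or.inl (wper_mem_SRomega_of_crossing huv hg hc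
      (hsub _ h _ ((List.sublist_append_left _ v).append (List.Sublist.refl _))))

end Crossing

/-- If `S ⊆ Σ` and `R ⊆ (Σ \ S)*` is subword-closed with residuals totally
ordered by inclusion, then `L = Σ*(S·R)^ω` satisfies: `(u v)^ω ∈ L` implies
`u^ω ∈ L` or `v^ω ∈ L`. -/
theorem stmt7 {σ : Type*} [Inhabited σ] (S : Set σ) (R : Set (List σ))
    (hR : ∀ w ∈ R, ∀ a ∈ w, a ∉ S)
    (hsub : ∀ v ∈ R, ∀ u : List σ, u.Sublist v → u ∈ R)
    (hchain : ∀ u u' : List σ, resF R u ⊆ resF R u' ∨ resF R u' ⊆ resF R u) :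
    ∀ u v : List σ, u ≠ [] → v ≠ [] →
      wper (u ++ v) ∈ SRomega S R →
        wper u ∈ SRomega S R ∨ wper v ∈ SRomega S R := by
  intro u v hu _ hx
  obtain ⟨⟨z, hz, hzS⟩, huv⟩ :=
    gapsMem_wper_of_mem_SRomega hR (List.append_ne_nil_of_left_ne_nil hu v) hx
  have hvu : GapsMem S R (wper (v ++ u)) 0 := wper_append_comm u v ▸ huv.comp_add u.length
  rcases List.mem_append.1 hz with hzu | hzv
  · exact wper_mem_SRomega_or_of_gapsMem_append hsub hchain ⟨z, hzu, hzS⟩ huv hvu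
  · exact (wper_mem_SRomega_or_of_gapsMem_append hsub hchain ⟨z, hzv, hzS⟩ hvu huv).symm
end

section
/- Let L ⊆ Σ* be a subword-closed language with anti-dictionary D (i.e., w ∈ L iff no element of D is a subword of w, and D is the set of minimal forbidden subwords). Then L has residuals totally ordered by inclusion if and only if for every pair of factorizations x y ∈ D and u v ∈ D, there exists d ∈ D such that d is a subword of x v or d is a subword of u y. -/
/-- A subword-closed language `L ⊆ Σ*` with anti-dictionary `D` (the set of
minimal forbidden subwords) has residuals totally ordered by inclusion iff for
all factorizations `x y ∈ D` and `u v ∈ D`, some `d ∈ D` is a subword of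
`x v` or of `u y`. -/
theorem stmt8 {σ : Type*} (L : Set (List σ)) (D : Set (List σ))
    (hanti : ∀ w : List σ, w ∈ L ↔ ∀ d ∈ D, ¬ d.Sublist w)
    (hmin : ∀ d ∈ D, ∀ d' : List σ, d'.Sublist d → d' ≠ d → d' ∈ L) :
    (∀ u u' : List σ, resF L u ⊆ resF L u' ∨ resF L u' ⊆ resF L u) ↔
      ∀ x y u v : List σ, x ++ y ∈ D → u ++ v ∈ D →
        ∃ d ∈ D, d.Sublist (x ++ v) ∨ d.Sublist (u ++ y) := by
  have hDnotL : ∀ d ∈ D, d ∉ L := fun d hd hL =>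
    (hanti d).mp hL d hd (List.Sublist.refl d)
  constructor
  · intro htot x y u v hxy huv
    by_contra h
    push_neg at h
    have hxv : x ++ v ∈ L := (hanti _).mpr (fun d hd => (h d hd).1)
    have huy : u ++ y ∈ L := (hanti _).mpr (fun d hd => (h d hd).2)
    rcases htot x u with hsub | hsub
    · exact hDnotL _ huv (hsub hxv)
    · exact hDnotL _ hxy (hsub huy)
  · intro hcond u u'
    by_contra h
    push_neg at h
    obtain ⟨h1, h2⟩ := h
    rw [Set.not_subset] at h1 h2
    obtain ⟨w, hw1, hw2⟩ := h1
    obtain ⟨w', hw1', hw2'⟩ := h2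
    have hL1 : u ++ w ∈ L := hw1
    have hL2 : u' ++ w' ∈ L := hw1'
    have hd1 : ∃ d ∈ D, d.Sublist (u' ++ w) := by
      by_contra hc; push_neg at hc; exact hw2 ((hanti _).mpr hc)
    have hd2 : ∃ d ∈ D, d.Sublist (u ++ w') := by
      by_contra hc; push_neg at hc; exact hw2' ((hanti _).mpr hc)
    obtain ⟨d, hdD, hds⟩ := hd1
    obtain ⟨d', hdD', hds'⟩ := hd2
    rw [List.sublist_append_iff] at hds hds'
    obtain ⟨x, yw, rfl, hx, hyw⟩ := hds
    obtain ⟨a, b, rfl, ha, hb⟩ := hds'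
    obtain ⟨e, heD, hcase⟩ := hcond x yw a b hdD hdD'
    rcases hcase with he | he
    · exact ((hanti _).mp hL2 e heD (he.trans (hx.append hb)))
    · exact ((hanti _).mp hL1 e heD (he.trans (ha.append hyw)))
end

section
/- Every subword-closed language L ⊆ Σ* whose anti-dictionary is a single word {w} has residuals totally ordered by inclusion. -/
private def remAux {σ : Type*} [DecidableEq σ] : List σ → List σ → List σ
  | _, [] => []
  | [], w => w
  | a :: u, b :: w' => if a = b then remAux u w' else remAux u (b :: w')

private lemma remAux_nil {σ : Type*} [DecidableEq σ] (u : List σ) :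
    remAux u ([] : List σ) = [] := by cases u <;> rfl

private lemma remAux_suffix {σ : Type*} [DecidableEq σ] (u w : List σ) :
    remAux u w <:+ w := by
  induction u generalizing w with
  | nil => cases w <;> simp [remAux]
  | cons a u ih =>
    cases w with
    | nil => simp [remAux]
    | cons b w' =>
      by_cases h : a = b
      · simp only [remAux, if_pos h]
        exact (ih w').trans (List.suffix_cons b w')
      · simp only [remAux, if_neg h]
        exact ih (b :: w')

private lemma remAux_spec {σ : Type*} [DecidableEq σ] (u w x : List σ) :
    w.Sublist (u ++ x) ↔ (remAux u w).Sublist x := by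
  induction u generalizing w with
  | nil => cases w <;> simp [remAux]
  | cons a u ih =>
    cases w with
    | nil => simp [remAux_nil]
    | cons b w' =>
      by_cases h : b = a
      · subst h
        simp only [remAux, if_true, eq_self_iff_true, List.cons_append, if_pos]
        rw [← ih w']
        constructor
        · intro hs
          rcases (List.cons_sublist_cons' (a := b) (b := b)).1 hs with h1 | h1
          · exact (List.sublist_cons_self b w').trans h1
          · exact h1.2
        · exact fun hs => List.cons_sublist_cons.2 hs
      · have h' : a ≠ b := fun e => h e.symm
        simp only [remAux, if_neg h', List.cons_append]
        rw [← ih (b :: w')]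
        constructor
        · intro hs
          rcases (List.cons_sublist_cons').1 hs with h1 | h1
          · exact h1
          · exact absurd h1.1 h
        · exact fun hs => hs.trans (List.sublist_cons_self a (u ++ x))

private lemma suffix_total {σ : Type*} {s t w : List σ} (hs : s <:+ w) (ht : t <:+ w) :
    s <:+ t ∨ t <:+ s := by
  rw [← List.reverse_prefix] at hs ht ⊢
  rw [← List.reverse_prefix]
  rcases le_total s.reverse.length t.reverse.length with h | h
  · exact Or.inl (List.prefix_of_prefix_length_le hs ht h)
  · exact Or.inr (List.prefix_of_prefix_length_le ht hs h)

/-- Every subword-closed language whose anti-dictionary is a single word has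
residuals totally ordered by inclusion. -/
theorem stmt9 {σ : Type*} (L : Set (List σ)) (w : List σ)
    (hanti : ∀ v : List σ, v ∈ L ↔ ¬ w.Sublist v) :
    ∀ u u' : List σ, resF L u ⊆ resF L u' ∨ resF L u' ⊆ resF L u := by
  classical
  intro u u'
  have key : ∀ a b : List σ, remAux a w <:+ remAux b w → resF L a ⊆ resF L b := by
    intro a b hab x hx
    simp only [resF, Set.mem_setOf_eq, hanti] at hx ⊢
    intro hc
    exact hx ((remAux_spec a w x).2 (hab.sublist.trans ((remAux_spec b w x).1 hc)))
  rcases suffix_total (remAux_suffix u w) (remAux_suffix u' w) with h | h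
  · exact Or.inl (key u u' h)
  · exact Or.inr (key u' u h)
end

section
/- If D is the anti-dictionary of a subword-closed language with residuals totally ordered by inclusion, and a ∈ Σ is a single letter, then D ∪ {a} is the anti-dictionary of a subword-closed language whose residuals are also totally ordered by inclusion. -/
/-- The subword-closed language defined by an anti-dictionary `D`. -/
def LD {σ : Type*} (D : Set (List σ)) : Set (List σ) :=
  {w | ∀ d ∈ D, ¬ d.Sublist w}

/-- If `D` is the anti-dictionary of a subword-closed language whose residuals
are totally ordered by inclusion, and `a` is a single letter, then `D ∪ {[a]}`
is the anti-dictionary of a subword-closed language whose residuals are also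
totally ordered by inclusion. -/
theorem stmt10 {σ : Type*} (D : Set (List σ)) (a : σ)
    (hchain : ∀ u u' : List σ, resF (LD D) u ⊆ resF (LD D) u' ∨
      resF (LD D) u' ⊆ resF (LD D) u) :
    ∀ u u' : List σ, resF (LD (D ∪ {[a]})) u ⊆ resF (LD (D ∪ {[a]})) u' ∨
      resF (LD (D ∪ {[a]})) u' ⊆ resF (LD (D ∪ {[a]})) u := by
  have empty : ∀ u : List σ, a ∈ u → resF (LD (D ∪ {[a]})) u = ∅ := by
    intro u hu
    ext w
    simp only [Set.mem_empty_iff_false, iff_false]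
    intro hw
    exact hw [a] (Or.inr rfl) (List.singleton_sublist.2 (List.mem_append_left w hu))
  have mono : ∀ u u' : List σ, a ∉ u' → resF (LD D) u ⊆ resF (LD D) u' →
      resF (LD (D ∪ {[a]})) u ⊆ resF (LD (D ∪ {[a]})) u' := by
    intro u u' hu' hsub w hw
    have hD : w ∈ resF (LD D) u := fun d hd => hw d (Or.inl hd)
    have hna : a ∉ w := by
      intro haw
      exact hw [a] (Or.inr rfl) (List.singleton_sublist.2 (List.mem_append_right u haw))
    intro d hd
    rcases hd with hd | hd
    · exact hsub hD d hd
    · rw [hd, List.singleton_sublist, List.mem_append]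
      rintro (h | h)
      · exact hu' h
      · exact hna h
  intro u u'
  by_cases hu : a ∈ u
  · left; rw [empty u hu]; exact Set.empty_subset _
  by_cases hu' : a ∈ u'
  · right; rw [empty u' hu']; exact Set.empty_subset _
  rcases hchain u u' with h | h
  · exact Or.inl (mono u u' hu' h)
  · exact Or.inr (mono u' u hu h)
end

section
/- For a nonerasing monoid homomorphism φ : A* → B* extended to infinite words, and sets A₁, …, Aₙ ⊆ B, the preimage φ⁻¹(FG(A₁) ∪ … ∪ FG(Aₙ)) equals FG(C₁) ∪ … ∪ FG(Cₙ), where Cᵢ = {a ∈ A | every letter of φ(a) lies in Aᵢ}. -/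
def FGset {σ : Type*} (A : Set σ) : Set (ℕ → σ) :=
  {x | ∃ N : ℕ, ∀ n, N ≤ n → x n ∈ A}

def lensum {A B : Type*} (f : A → List B) (x : ℕ → A) (n : ℕ) : ℕ :=
  ∑ i ∈ Finset.range n, (f (x i)).length

/-- The extension to infinite words of the nonerasing monoid homomorphism
`A* → B*` determined by letter images `f : A → List B`. -/
def phiInf {A B : Type*} [Inhabited B] (f : A → List B) (x : ℕ → A) (m : ℕ) : B :=
  let n := Nat.findGreatest (fun k => lensum f x k ≤ m) m
  (f (x n)).getD (m - lensum f x n) default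

lemma lensum_succ {A B : Type*} (f : A → List B) (x : ℕ → A) (n : ℕ) :
    lensum f x (n + 1) = lensum f x n + (f (x n)).length :=
  Finset.sum_range_succ _ _

lemma lensum_mono {A B : Type*} (f : A → List B) (x : ℕ → A) {a b : ℕ} (h : a ≤ b) :
    lensum f x a ≤ lensum f x b :=
  Finset.sum_le_sum_of_subset (Finset.range_subset_range.mpr h)

lemma le_lensum {A B : Type*} (f : A → List B) (hf : ∀ a : A, f a ≠ []) (x : ℕ → A) (n : ℕ) :
    n ≤ lensum f x n := by
  calc n = ∑ _i ∈ Finset.range n, 1 := by simp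
    _ ≤ lensum f x n := Finset.sum_le_sum fun i _ =>
        List.length_pos_iff.mpr (hf (x i))

/-- basic facts about the block index -/
lemma block_facts {A B : Type*} (f : A → List B) (hf : ∀ a : A, f a ≠ []) (x : ℕ → A) (m : ℕ) :
    lensum f x (Nat.findGreatest (fun k => lensum f x k ≤ m) m) ≤ m ∧
    m < lensum f x (Nat.findGreatest (fun k => lensum f x k ≤ m) m + 1) := by
  set P : ℕ → Prop := fun k => lensum f x k ≤ m with hP
  set g := Nat.findGreatest P m with hg
  have hP0 : P 0 := by simp [hP, lensum]
  have h1 : P g := Nat.findGreatest_spec (Nat.zero_le m) hP0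
  refine ⟨h1, ?_⟩
  by_cases hgm : g + 1 ≤ m
  · have := Nat.findGreatest_is_greatest (Nat.lt_succ_self g) hgm
    simpa [hP] using Nat.lt_of_not_le this
  · have : m < g + 1 := Nat.lt_of_not_le hgm
    exact lt_of_lt_of_le this (le_lensum f hf x (g + 1))

lemma phiInf_mem {A B : Type*} [Inhabited B] (f : A → List B) (hf : ∀ a : A, f a ≠ [])
    (x : ℕ → A) (m : ℕ) :
    phiInf f x m ∈ f (x (Nat.findGreatest (fun k => lensum f x k ≤ m) m)) := by
  obtain ⟨h1, h2⟩ := block_facts f hf x m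
  set g := Nat.findGreatest (fun k => lensum f x k ≤ m) m with hg
  have hlt : m - lensum f x g < (f (x g)).length := by
    have := lensum_succ f x g
    omega
  show (f (x g)).getD (m - lensum f x g) default ∈ f (x g)
  rw [List.getD_eq_getElem _ _ hlt]
  exact List.getElem_mem _

lemma findGreatest_eq_block {A B : Type*} (f : A → List B) (hf : ∀ a : A, f a ≠ [])
    (x : ℕ → A) (n j : ℕ) (hj : j < (f (x n)).length) :
    Nat.findGreatest (fun k => lensum f x k ≤ lensum f x n + j) (lensum f x n + j) = n := by
  have hnm : n ≤ lensum f x n + j := le_trans (le_lensum f hf x n) (Nat.le_add_right _ _)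
  refine Nat.findGreatest_eq_iff.mpr ⟨hnm, fun _ => Nat.le_add_right _ _, ?_⟩
  intro k hk _
  simp only [not_le]
  have h1 : lensum f x (n + 1) ≤ lensum f x k := lensum_mono f x hk
  have h2 := lensum_succ f x n
  omega

lemma phiInf_block {A B : Type*} [Inhabited B] (f : A → List B) (hf : ∀ a : A, f a ≠ [])
    (x : ℕ → A) (n j : ℕ) (hj : j < (f (x n)).length) :
    phiInf f x (lensum f x n + j) = (f (x n)).get ⟨j, hj⟩ := by
  have heq := findGreatest_eq_block f hf x n j hj
  show (f (x (Nat.findGreatest (fun k => lensum f x k ≤ lensum f x n + j)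
      (lensum f x n + j)))).getD
      (lensum f x n + j - lensum f x (Nat.findGreatest
        (fun k => lensum f x k ≤ lensum f x n + j) (lensum f x n + j))) default
      = (f (x n)).get ⟨j, hj⟩
  rw [heq, Nat.add_sub_cancel_left, List.getD_eq_getElem _ _ hj, List.get_eq_getElem]

/-- For a nonerasing homomorphism `φ : A* → B*` extended to infinite words and
sets `A₁, …, Aₙ ⊆ B`, `φ⁻¹(FG(A₁) ∪ … ∪ FG(Aₙ)) = FG(C₁) ∪ … ∪ FG(Cₙ)` where
`Cᵢ = {a | every letter of φ(a) lies in Aᵢ}`. -/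
theorem stmt15 {A B : Type*} [Inhabited B] (f : A → List B)
    (hf : ∀ a : A, f a ≠ []) {n : ℕ} (As : Fin n → Set B) :
    {x : ℕ → A | phiInf f x ∈ ⋃ i, FGset (As i)} =
      ⋃ i, FGset {a : A | ∀ b ∈ f a, b ∈ As i} := by
  ext x
  simp only [Set.mem_setOf_eq, Set.mem_iUnion, FGset]
  constructor
  · rintro ⟨i, N, h⟩
    refine ⟨i, N, fun k hk => ?_⟩
    intro b hb
    obtain ⟨⟨j, hj⟩, rfl⟩ := List.mem_iff_get.mp hb
    have hm : N ≤ lensum f x k + j :=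
      le_trans hk (le_trans (le_lensum f hf x k) (Nat.le_add_right _ _))
    have := h (lensum f x k + j) hm
    rwa [phiInf_block f hf x k j hj] at this
  · rintro ⟨i, N, h⟩
    refine ⟨i, lensum f x N, fun m hm => ?_⟩
    set g := Nat.findGreatest (fun k => lensum f x k ≤ m) m with hg
    have hNg : N ≤ g :=
      Nat.le_findGreatest (le_trans (le_lensum f hf x N) hm) hm
    exact h g hNg _ (phiInf_mem f hf x m)
end

section
/- The LTL/ω-language equivalence E(GF ψ ∧ FG φ ∧ G χ) ≡ E(χ U (E G((φ ∧ χ) U (ψ ∧ φ ∧ χ)))) holds on linear traces, in the following concrete sense: an infinite word x over the alphabet 2^{p,q,r} satisfies GF p ∧ FG q ∧ G r if and only if there exists an index n such that x[i] contains r for all i < n and the suffix x[n..] satisfies G((q ∧ r) U (p ∧ q ∧ r)). -/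
/-- The equivalence `GF p ∧ FG q ∧ G r ≡ r U (G((q ∧ r) U (p ∧ q ∧ r)))` on
infinite words over `2^{p,q,r}`, encoded by three predicates `p q r : ℕ → Prop`
giving the letters at each position. -/
theorem stmt16 (p q r : ℕ → Prop) :
    ((∀ n : ℕ, ∃ k, n ≤ k ∧ p k) ∧ (∃ N : ℕ, ∀ n, N ≤ n → q n) ∧ (∀ n, r n)) ↔
      ∃ n : ℕ, (∀ i, i < n → r i) ∧
        ∀ i, n ≤ i → ∃ k : ℕ,
          (p (i + k) ∧ q (i + k) ∧ r (i + k)) ∧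
          ∀ j, j < k → q (i + j) ∧ r (i + j) := by
  constructor
  · rintro ⟨hgf, ⟨N, hq⟩, hr⟩
    refine ⟨N, fun i _ => hr i, fun i hi => ?_⟩
    obtain ⟨m, hm, hpm⟩ := hgf i
    exact ⟨m - i, by
      have : i + (m - i) = m := by omega
      rw [this]
      exact ⟨hpm, hq m (by omega), hr m⟩,
      fun j _ => ⟨hq (i + j) (by omega), hr (i + j)⟩⟩
  · rintro ⟨n, hrlt, hU⟩
    have hqr : ∀ i, n ≤ i → q i ∧ r i := by
      intro i hi
      obtain ⟨k, ⟨_, hq, hr⟩, hj⟩ := hU i hi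
      rcases Nat.eq_zero_or_pos k with hk | hk
      · subst hk; simpa using ⟨hq, hr⟩
      · simpa using hj 0 hk
    refine ⟨fun m => ?_, ⟨n, fun i hi => (hqr i hi).1⟩, fun i => ?_⟩
    · obtain ⟨k, ⟨hp, _, _⟩, _⟩ := hU (max n m) (le_max_left _ _)
      exact ⟨max n m + k, by omega, hp⟩
    · rcases lt_or_ge i n with h | h
      · exact hrlt i h
      · exact (hqr i h).2
end
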